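/- (Krull–Schmidt for virtually simple modules) Let M = V_1 ⊕ ... ⊕ V_n and N = U_1 ⊕ ... ⊕ U_m where all V_i and U_j are virtually simple R-modules. If M embeds into N and N embeds into M, then n = m and there is a permutation σ of {1,...,n} such that U_i ≅ V_{σ(i)} for all i. -/
import Mathlib

def VirtuallySimple (R : Type*) [Ring R] (M : Type*) [AddCommGroup M] [Module R M] : Prop :=
  Nontrivial M ∧ ∀ N : Submodule R M, N ≠ ⊥ → Nonempty (N ≃ₗ[R] M)

section KS
variable {R : Type*} [Ring R]

/-- The uniformity property: any two nonzero submodules intersect nontrivially. -/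
def UnifP (R : Type*) [Ring R] (P : Type*) [AddCommGroup P] [Module R P] : Prop :=
  ∀ A B : Submodule R P, A ≠ ⊥ → B ≠ ⊥ → A ⊓ B ≠ ⊥

variable {M : Type*} [AddCommGroup M] [Module R M]

lemma vs_finite (h : VirtuallySimple R M) : Module.Finite R M := by
  haveI := h.1
  obtain ⟨v, hv⟩ := exists_ne (0 : M)
  have hb : Submodule.span R {v} ≠ ⊥ := by
    simpa [Submodule.span_singleton_eq_bot] using hv
  obtain ⟨e⟩ := h.2 _ hb
  have : Module.Finite R (Submodule.span R {v}) :=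
    Module.Finite.iff_fg.mpr (Submodule.fg_span_singleton v)
  exact Module.Finite.equiv e

lemma vs_noetherian (h : VirtuallySimple R M) : IsNoetherian R M := by
  haveI := vs_finite h
  rw [isNoetherian_def]
  intro s
  rcases eq_or_ne s ⊥ with rfl | hs
  · exact Submodule.fg_bot
  · obtain ⟨e⟩ := h.2 s hs
    have : Module.Finite R s := Module.Finite.equiv e.symm
    exact Module.Finite.iff_fg.mp this

lemma vs_uniform (h : VirtuallySimple R M) : UnifP R M := by
  classical
  haveI hnoe := vs_noetherian h
  intro A B hA hB
  by_contra hAB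
  -- iterated shrinking
  let T := {p : Submodule R M × Submodule R M // p.1 ≠ ⊥ ∧ p.2 ≠ ⊥ ∧ p.1 ⊓ p.2 = ⊥}
  have step : ∀ p : T, {q : T // q.1.1 ⊔ q.1.2 ≤ p.1.1} := by
    rintro ⟨⟨A', B'⟩, hA', hB', hAB'⟩
    let e := (h.2 A' hA').some
    let F : M →ₗ[R] M := A'.subtype ∘ₗ (e.symm : M →ₗ[R] A')
    have hFi : Function.Injective F :=
      A'.injective_subtype.comp e.symm.injective
    have hFr : ∀ C : Submodule R M, Submodule.map F C ≤ A' := by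
      rintro C x ⟨y, -, rfl⟩
      exact (e.symm y).2
    have hne : ∀ C : Submodule R M, C ≠ ⊥ → Submodule.map F C ≠ ⊥ := by
      intro C hC
      obtain ⟨x, hx, hx0⟩ := Submodule.ne_bot_iff C |>.mp hC
      refine (Submodule.ne_bot_iff _).mpr ⟨F x, Submodule.mem_map_of_mem hx, ?_⟩
      intro h0
      exact hx0 (hFi (by simpa using h0))
    refine ⟨⟨(Submodule.map F A, Submodule.map F B), hne _ hA, hne _ hB, ?_⟩, ?_⟩
    · rw [← Submodule.map_inf F hFi, hAB, Submodule.map_bot]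
    · exact sup_le (hFr A) (hFr B)
  let seq : ℕ → T := fun n => Nat.rec ⟨(A, B), hA, hB, hAB⟩ (fun _ p => (step p).1) n
  have hseq : ∀ n, (seq (n+1)).1.1 ⊔ (seq (n+1)).1.2 ≤ (seq n).1.1 := fun n => (step (seq n)).2
  set As : ℕ → Submodule R M := fun n => (seq n).1.1 with hAs
  set Bs : ℕ → Submodule R M := fun n => (seq n).1.2 with hBs
  have hABn : ∀ n, As n ⊓ Bs n = ⊥ := fun n => (seq n).2.2.2
  have hBne : ∀ n, Bs n ≠ ⊥ := fun n => (seq n).2.2.1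
  have hBA : ∀ n, Bs (n+1) ≤ As n := fun n => le_trans le_sup_right (hseq n)
  have hAA : ∀ n, As (n+1) ≤ As n := fun n => le_trans le_sup_left (hseq n)
  let C : ℕ →o Submodule R M :=
    ⟨fun n => (Finset.range (n+1)).sup Bs, by
      intro a b hab
      exact Finset.sup_mono (Finset.range_subset_range.mpr (by omega))⟩
  have hCsucc : ∀ n, C (n+1) = C n ⊔ Bs (n+1) := by
    intro n
    show (Finset.range (n+2)).sup Bs = _
    rw [Finset.range_add_one, Finset.sup_insert, sup_comm]
    rfl
  have hCA : ∀ n, C n ⊓ As n = ⊥ := by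
    intro n
    induction n with
    | zero =>
      have : C 0 = Bs 0 := by
        show (Finset.range 1).sup Bs = Bs 0
        simp
      rw [this, inf_comm]
      exact hABn 0
    | succ n ih =>
      have h1 : C (n+1) ⊓ As n = Bs (n+1) := by
        rw [hCsucc n, sup_comm, sup_inf_assoc_of_le _ (hBA n), ih, sup_bot_eq]
      have h2 : As (n+1) = As n ⊓ As (n+1) := (inf_eq_right.mpr (hAA n)).symm
      rw [h2, ← inf_assoc, h1, inf_comm]
      exact hABn (n+1)
  have hmono : ∀ n, C n ≠ C (n+1) := by
    intro n hEq
    have hb : Bs (n+1) ≤ C n := hEq ▸ (hCsucc n ▸ le_sup_right)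
    have : Bs (n+1) ≤ C n ⊓ As n := le_inf hb (hBA n)
    rw [hCA n, le_bot_iff] at this
    exact hBne (n+1) this
  obtain ⟨k, hk⟩ := monotone_stabilizes_iff_noetherian.mpr hnoe C
  exact hmono k (hk (k+1) (Nat.le_succ k))

lemma emb_iso {P Q : Type*} [AddCommGroup P] [Module R P] [AddCommGroup Q] [Module R Q]
    (hP : Nontrivial P) (hQ : VirtuallySimple R Q) (h : P →ₗ[R] Q)
    (hi : Function.Injective h) : Nonempty (P ≃ₗ[R] Q) := by
  have hr : LinearMap.range h ≠ ⊥ := by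
    obtain ⟨x, hx⟩ := exists_ne (0 : P)
    refine (Submodule.ne_bot_iff _).mpr ⟨h x, LinearMap.mem_range_self h x, fun h0 => hx ?_⟩
    exact hi (by simpa using h0)
  obtain ⟨e2⟩ := hQ.2 _ hr
  exact ⟨(LinearEquiv.ofInjective h hi).trans e2⟩

lemma inf_ne_bot {P : Type*} [AddCommGroup P] [Module R P] (hu : UnifP R P)
    (hnt : Nontrivial P) {κ : Type*} (s : Finset κ) (f : κ → Submodule R P)
    (hf : ∀ j ∈ s, f j ≠ ⊥) : s.inf f ≠ ⊥ := by
  classical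
  induction s using Finset.induction_on with
  | empty =>
    simp only [Finset.inf_empty]
    exact top_ne_bot
  | @insert a s hnotmem ih =>
    rw [Finset.inf_insert]
    exact hu _ _ (hf a (Finset.mem_insert_self a s))
      (ih fun j hj => hf j (Finset.mem_insert_of_mem hj))

lemma proj_exists {P : Type*} [AddCommGroup P] [Module R P] (hu : UnifP R P)
    (hnt : Nontrivial P) {κ : Type*} [Fintype κ] (U : κ → Type*)
    [∀ j, AddCommGroup (U j)] [∀ j, Module R (U j)]
    (h : P →ₗ[R] ((j : κ) → U j)) (hi : Function.Injective h) :
    ∃ j, Function.Injective ((LinearMap.proj j).comp h) := by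
  by_contra hc
  push_neg at hc
  have hk : ∀ j, LinearMap.ker ((LinearMap.proj (R := R) (φ := U) j).comp h) ≠ ⊥ :=
    fun j hj => hc j (LinearMap.ker_eq_bot.mp hj)
  have hinf := inf_ne_bot hu hnt Finset.univ
    (fun j => LinearMap.ker ((LinearMap.proj (R := R) (φ := U) j).comp h))
    (fun j _ => hk j)
  apply hinf
  rw [eq_bot_iff]
  intro x hx
  rw [Submodule.mem_finsetInf] at hx
  have hx0 : h x = 0 := by
    funext j
    exact hx j (Finset.mem_univ j)
  simpa using hi (by simpa using hx0)


universe u v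

lemma goldie_card :
    ∀ (b : ℕ) (ι κ : Type) [Fintype ι] [Fintype κ], Fintype.card κ = b →
    ∀ (Y : ι → Type u) (U : κ → Type v)
      [∀ k, AddCommGroup (Y k)] [∀ k, Module R (Y k)]
      [∀ j, AddCommGroup (U j)] [∀ j, Module R (U j)],
      (∀ k, Nontrivial (Y k)) → (∀ j, UnifP R (U j)) →
      ∀ g : ((k : ι) → Y k) →ₗ[R] ((j : κ) → U j), Function.Injective g →
      Fintype.card ι ≤ b := by
  intro b
  induction b with
  | zero =>
    intro ι κ _ _ hκ Y U _ _ _ _ hY hU g hg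
    classical
    haveI : IsEmpty κ := Fintype.card_eq_zero_iff.mp hκ
    haveI : Subsingleton ((j : κ) → U j) := inferInstance
    have hsub : Subsingleton ((k : ι) → Y k) := hg.subsingleton
    have : IsEmpty ι := by
      by_contra hne
      rw [not_isEmpty_iff] at hne
      obtain ⟨k⟩ := hne
      obtain ⟨y, hy⟩ := exists_ne (0 : Y k)
      apply hy
      have : (Pi.single k y : (k : ι) → Y k) = 0 := Subsingleton.elim _ _
      calc y = Pi.single k y k := (Pi.single_eq_same k y).symm
        _ = 0 := by rw [this]; rfl
    simp [Fintype.card_eq_zero_iff.mpr this]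
  | succ b IH =>
    intro ι κ _ _ hκ Y U _ _ _ _ hY hU g hg
    classical
    obtain ⟨j₀⟩ : Nonempty κ := Fintype.card_pos_iff.mp (by omega)
    let π : ((k : ι) → Y k) →ₗ[R] U j₀ := (LinearMap.proj j₀).comp g
    let p : (k : ι) → (Y k →ₗ[R] U j₀) := fun k => π.comp (LinearMap.single R Y k)
    -- restriction to coordinates ≠ j₀
    let κ' := {j : κ // j ≠ j₀}
    have hκ' : Fintype.card κ' = b := by
      have h1 : Fintype.card {j : κ // j = j₀} = 1 := Fintype.card_subtype_eq j₀
      have h2 := Fintype.card_subtype_compl (fun j : κ => j = j₀)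
      show Fintype.card {j : κ // ¬ j = j₀} = b
      omega
    let ρ : ((j : κ) → U j) →ₗ[R] ((j : κ') → U j.1) := LinearMap.pi fun j => LinearMap.proj j.1
    by_cases hcase : ∃ k₀, LinearMap.ker (p k₀) = ⊥
    · -- some Y k₀ embeds in U j₀
      obtain ⟨k₀, hk₀⟩ := hcase
      have injp : Function.Injective (p k₀) := LinearMap.ker_eq_bot.mp hk₀
      set I : Submodule R (U j₀) := LinearMap.range (p k₀) with hI
      let e : Y k₀ ≃ₗ[R] I := LinearEquiv.ofInjective (p k₀) injp
      let ι' := {k : ι // k ≠ k₀}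
      let Y' : (k : ι') → Submodule R (Y k.1) := fun k => Submodule.comap (p k.1) I
      have hY' : ∀ k : ι', Nontrivial (Y' k) := by
        intro k
        rw [Submodule.nontrivial_iff_ne_bot]
        by_cases hrange : LinearMap.range (p k.1) = ⊥
        · obtain ⟨y, hy⟩ := exists_ne (0 : Y k.1)
          refine (Submodule.ne_bot_iff _).mpr ⟨y, ?_, hy⟩
          have : p k.1 y = 0 := by
            have := LinearMap.range_eq_bot.mp hrange
            rw [this]; rfl
          simp [Y', Submodule.mem_comap, this]
        · have hIne : I ≠ ⊥ := by
            refine (Submodule.ne_bot_iff _).mpr ?_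
            obtain ⟨y, hy⟩ := exists_ne (0 : Y k₀)
            exact ⟨p k₀ y, LinearMap.mem_range_self _ y,
              fun h0 => hy (injp (by simpa using h0))⟩
          have := hU j₀ _ _ hrange hIne
          obtain ⟨u, hu1, hu0⟩ := (Submodule.ne_bot_iff _).mp this
          obtain ⟨y, rfl⟩ := hu1.1
          refine (Submodule.ne_bot_iff _).mpr ⟨y, hu1.2, fun h0 => hu0 (by rw [h0]; simp)⟩
      -- correction maps
      let c : (k : ι') → (Y' k →ₗ[R] Y k₀) := fun k =>
        (e.symm : I →ₗ[R] Y k₀).comp ((p k.1).restrict (fun x hx => hx))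
      have key : ∀ (k : ι') (y : Y' k), p k₀ (c k y) = p k.1 y.1 := by
        intro k y
        have h1 : ∀ u : I, p k₀ (e.symm u) = u.1 := by
          intro u
          have h2 : (e (e.symm u) : U j₀) = u.1 := by rw [e.apply_symm_apply]
          simp only [e, LinearEquiv.ofInjective_apply] at h2
          exact h2
        exact h1 _
      -- the composite map
      let Ω : ((k : ι') → Y' k) →ₗ[R] ((k : ι) → Y k) :=
        (∑ k : ι', (LinearMap.single R Y k.1) ∘ₗ ((Y' k).subtype ∘ₗ LinearMap.proj k)) -
        (LinearMap.single R Y k₀) ∘ₗ (∑ k : ι', (c k) ∘ₗ LinearMap.proj k)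
      have hΩcoord : ∀ (v : (k : ι') → Y' k) (k : ι'), Ω v k.1 = (v k).1 := by
        intro v k
        have h1 : (∑ k' : ι', (LinearMap.single R Y k'.1) ∘ₗ ((Y' k').subtype ∘ₗ LinearMap.proj k')) v k.1
            = (v k).1 := by
          rw [LinearMap.sum_apply]
          rw [Finset.sum_apply]
          rw [Finset.sum_eq_single k]
          · simp
          · intro k' _ hne
            have : k'.1 ≠ k.1 := fun h => hne (Subtype.ext h)
            simp [Pi.single_eq_of_ne' this]
          · intro h; exact absurd (Finset.mem_univ k) h
        have h2 : ((LinearMap.single R Y k₀) ∘ₗ (∑ k' : ι', (c k') ∘ₗ LinearMap.proj k')) v k.1 = 0 := by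
          have : k.1 ≠ k₀ := k.2
          simp [Pi.single_eq_of_ne' this.symm, Pi.single_eq_of_ne this]
        simp only [Ω, LinearMap.sub_apply, Pi.sub_apply, h1, h2, sub_zero]
      have hπΩ : ∀ v, π (Ω v) = 0 := by
        intro v
        have hA : π ((∑ k : ι', (LinearMap.single R Y k.1) ∘ₗ ((Y' k).subtype ∘ₗ LinearMap.proj k)) v)
            = ∑ k : ι', p k.1 (v k).1 := by
          rw [LinearMap.sum_apply, map_sum]
          exact Finset.sum_congr rfl fun k _ => rfl
        have hB : π (((LinearMap.single R Y k₀) ∘ₗ (∑ k : ι', (c k) ∘ₗ LinearMap.proj k)) v)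
            = ∑ k : ι', p k₀ (c k (v k)) := by
          show p k₀ ((∑ k : ι', (c k) ∘ₗ LinearMap.proj k) v) = _
          rw [LinearMap.sum_apply, map_sum]
          exact Finset.sum_congr rfl fun k _ => rfl
        have hsub : π (Ω v) = (∑ k : ι', p k.1 (v k).1) - ∑ k : ι', p k₀ (c k (v k)) := by
          rw [show Ω v = _ - _ from LinearMap.sub_apply _ _ v, map_sub, hA, hB]
        rw [hsub, sub_eq_zero]
        exact Finset.sum_congr rfl fun k _ => (key k (v k)).symm
      let g₂ : ((k : ι') → Y' k) →ₗ[R] ((j : κ') → U j.1) := ρ ∘ₗ g ∘ₗ Ω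
      have hg₂ : Function.Injective g₂ := by
        intro v w hvw
        have hzero : g₂ (v - w) = 0 := by rw [map_sub, hvw, sub_self]
        have hΩ0 : g (Ω (v - w)) = 0 := by
          funext j
          by_cases hj : j = j₀
          · subst hj; exact hπΩ (v - w)
          · have h3 := congrFun hzero ⟨j, hj⟩
            simpa [g₂, ρ, LinearMap.pi_apply] using h3
        have hΩz : Ω (v - w) = 0 := hg (by simpa using hΩ0)
        funext k
        have h4 := hΩcoord (v - w) k
        rw [hΩz] at h4
        have h5 : ((v - w) k) = 0 := Subtype.ext (by simpa using h4.symm)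
        rwa [Pi.sub_apply, sub_eq_zero] at h5
      have hι' : Fintype.card ι' = Fintype.card ι - 1 := by
        have h1 : Fintype.card {k : ι // k = k₀} = 1 := Fintype.card_subtype_eq k₀
        have h2 := Fintype.card_subtype_compl (fun k : ι => k = k₀)
        show Fintype.card {k : ι // ¬ k = k₀} = Fintype.card ι - 1
        omega
      have hle := IH ι' κ' hκ' (fun k => Y' k) (fun j => U j.1) hY' (fun j => hU j.1) g₂ hg₂
      have hpos : 0 < Fintype.card ι := Fintype.card_pos_iff.mpr ⟨k₀⟩
      omega
    · -- all kernels nonzero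
      push_neg at hcase
      let Y' : (k : ι) → Submodule R (Y k) := fun k => LinearMap.ker (p k)
      have hY' : ∀ k, Nontrivial (Y' k) := fun k =>
        Submodule.nontrivial_iff_ne_bot.mpr (hcase k)
      let ψ : ((k : ι) → Y' k) →ₗ[R] ((k : ι) → Y k) :=
        LinearMap.pi fun k => (Y' k).subtype ∘ₗ LinearMap.proj k
      let g' : ((k : ι) → Y' k) →ₗ[R] ((j : κ') → U j.1) := ρ ∘ₗ g ∘ₗ ψ
      have hg' : Function.Injective g' := by
        intro v w hvw
        have hzero : g' (v - w) = 0 := by rw [map_sub, hvw, sub_self]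
        have hψ : ∀ x : (k : ι) → Y' k, π (ψ x) = 0 := by
          intro x
          have hd : ψ x = ∑ k : ι, Pi.single k ((x k).1) := by
            funext k
            rw [Finset.sum_apply]
            rw [Finset.sum_eq_single k]
            · simp [ψ, LinearMap.pi_apply]
            · intro k' _ hne
              exact Pi.single_eq_of_ne' hne _
            · intro h; exact absurd (Finset.mem_univ k) h
          rw [hd, map_sum]
          refine Finset.sum_eq_zero fun k _ => ?_
          have : π (Pi.single k (x k).1) = p k (x k).1 := rfl
          rw [this]
          exact (x k).2
        have hg0 : g (ψ (v - w)) = 0 := by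
          funext j
          by_cases hj : j = j₀
          · subst hj; exact hψ (v - w)
          · have := congrFun hzero ⟨j, hj⟩
            simpa [g', ρ] using this
        have : ψ (v - w) = 0 := hg (by simpa using hg0)
        funext k
        have h6 := congrFun this k
        simp only [ψ, LinearMap.pi_apply] at h6
        have h7 : (v - w) k = 0 := Subtype.ext (by simpa using h6)
        rwa [Pi.sub_apply, sub_eq_zero] at h7
      have hle := IH ι κ' hκ' (fun k => Y' k) (fun j => U j.1) hY' (fun j => hU j.1) g' hg'
      omega

attribute [local instance 10] Classical.propDecidable

lemma class_count {ι κ : Type} [Fintype ι] [Fintype κ]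
    (A : ι → Type u) (B : κ → Type v)
    [∀ i, AddCommGroup (A i)] [∀ i, Module R (A i)]
    [∀ j, AddCommGroup (B j)] [∀ j, Module R (B j)]
    (hA : ∀ i, VirtuallySimple R (A i)) (hB : ∀ j, VirtuallySimple R (B j))
    (F : ((i : ι) → A i) →ₗ[R] ((j : κ) → B j)) (hF : Function.Injective F)
    (P : Type w) [AddCommGroup P] [Module R P] :
    Fintype.card {i // Nonempty (A i ≃ₗ[R] P)} ≤ Fintype.card {j // Nonempty (B j ≃ₗ[R] P)} := by
  classical
  let T := {i // Nonempty (A i ≃ₗ[R] P)}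
  let S := {j // Nonempty (B j ≃ₗ[R] P)}
  let Sc := {j // ¬ Nonempty (B j ≃ₗ[R] P)}
  let ρc : ((j : κ) → B j) →ₗ[R] ((j : Sc) → B j.1) := LinearMap.pi fun j => LinearMap.proj j.1
  let ρS : ((j : κ) → B j) →ₗ[R] ((j : S) → B j.1) := LinearMap.pi fun j => LinearMap.proj j.1
  let φ : (i : T) → (A i.1 →ₗ[R] ((j : Sc) → B j.1)) := fun i => ρc ∘ₗ F ∘ₗ LinearMap.single R A i.1
  have hker : ∀ i : T, LinearMap.ker (φ i) ≠ ⊥ := by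
    intro i hXbot
    have hinj : Function.Injective (φ i) := LinearMap.ker_eq_bot.mp hXbot
    obtain ⟨j, hj⟩ := proj_exists (vs_uniform (hA i.1)) (hA i.1).1 (fun j : Sc => B j.1) (φ i) hinj
    obtain ⟨eAB⟩ := emb_iso (hA i.1).1 (hB j.1) _ hj
    exact j.2 ⟨eAB.symm.trans i.2.some⟩
  let Y : (i : T) → Submodule R (A i.1) := fun i => LinearMap.ker (φ i)
  have hYnt : ∀ i : T, Nontrivial (Y i) := fun i =>
    Submodule.nontrivial_iff_ne_bot.mpr (hker i)
  let Sg : ((i : T) → Y i) →ₗ[R] ((i : ι) → A i) :=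
    ∑ i : T, (LinearMap.single R A i.1) ∘ₗ ((Y i).subtype ∘ₗ LinearMap.proj i)
  have hSgcoord : ∀ (v : (i : T) → Y i) (i : T), Sg v i.1 = (v i).1 := by
    intro v i
    rw [LinearMap.sum_apply, Finset.sum_apply, Finset.sum_eq_single i]
    · simp
    · intro i' _ hne
      have : i'.1 ≠ i.1 := fun h => hne (Subtype.ext h)
      simp [Pi.single_eq_of_ne' this]
    · intro h; exact absurd (Finset.mem_univ i) h
  have hSgdecomp : ∀ v : (i : T) → Y i, Sg v = ∑ i : T, Pi.single i.1 (v i).1 := by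
    intro v
    rw [LinearMap.sum_apply]
    exact Finset.sum_congr rfl fun i _ => rfl
  let H : ((i : T) → Y i) →ₗ[R] ((j : S) → B j.1) := ρS ∘ₗ F ∘ₗ Sg
  have hH : Function.Injective H := by
    intro v w hvw
    have hzero : H (v - w) = 0 := by rw [map_sub, hvw, sub_self]
    have hFw : F (Sg (v - w)) = 0 := by
      funext j
      by_cases hj : Nonempty (B j ≃ₗ[R] P)
      · have h3 := congrFun hzero (⟨j, hj⟩ : S)
        simpa [H, ρS, LinearMap.pi_apply] using h3
      · have h4 : ρc (F (Sg (v - w))) = 0 := by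
          have h5 : ρc (F (Sg (v - w))) = ∑ i : T, φ i ((v - w) i).1 := by
            rw [hSgdecomp, map_sum, map_sum]
            exact Finset.sum_congr rfl fun i _ => rfl
          rw [h5]
          exact Finset.sum_eq_zero fun i _ => ((v - w) i).2
        have h6 := congrFun h4 (⟨j, hj⟩ : Sc)
        simpa [ρc, LinearMap.pi_apply] using h6
    have hSgz : Sg (v - w) = 0 := hF (by simpa using hFw)
    funext i
    have h7 := hSgcoord (v - w) i
    rw [hSgz] at h7
    have h8 : (v - w) i = 0 := Subtype.ext (by simpa using h7.symm)
    rwa [Pi.sub_apply, sub_eq_zero] at h8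
  have := goldie_card (Fintype.card S) T S rfl (fun i => Y i) (fun j => B j.1)
    hYnt (fun j => vs_uniform (hB j.1)) H hH
  exact this

lemma match_lemma {ι κ : Type} [DecidableEq ι] [DecidableEq κ] [Nonempty ι]
    (r : κ → ι → Prop)
    (hr : ∀ j j' i i', r j i → r j' i → r j' i' → r j i') :
    ∀ (b : ℕ) (sκ : Finset κ) (sι : Finset ι), sκ.card = b →
    (∀ j ∈ sκ, ∃ i, r j i) →
    (∀ i ∈ sι, ∃ j ∈ sκ, r j i) →
    (∀ j ∈ sκ, (sι.filter (fun i => r j i)).card =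
        (sκ.filter (fun j' => ∃ i, r j' i ∧ r j i)).card) →
    ∃ f : κ → ι, Set.InjOn f sκ ∧ (∀ j ∈ sκ, f j ∈ sι ∧ r j (f j)) ∧ sι ⊆ sκ.image f := by
  -- hmem: if j' and j share a witness, then r j i → r j' i
  have hmem : ∀ j j' i, (∃ i'', r j' i'' ∧ r j i'') → r j i → r j' i := by
    rintro j j' i ⟨i'', h1, h2⟩ h3
    exact hr j' j i'' i h1 h2 h3
  intro b
  induction b with
  | zero =>
    intro sκ sι hcard h1 h2 h4
    have hsκ : sκ = ∅ := Finset.card_eq_zero.mp hcard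
    subst hsκ
    have hsι : sι = ∅ := by
      by_contra hne
      obtain ⟨i, hi⟩ := Finset.nonempty_of_ne_empty hne
      obtain ⟨j, hj, -⟩ := h2 i hi
      exact absurd hj (Finset.notMem_empty j)
    subst hsι
    exact ⟨fun _ => Classical.arbitrary ι, by simp [Set.InjOn], by simp, by simp⟩
  | succ b IH =>
    intro sκ sι hcard h1 h2 h4
    have hsnon : 0 < sκ.card := by omega
    obtain ⟨j₀, hj₀⟩ := Finset.card_pos.mp hsnon
    -- find i₀ ∈ sι with r j₀ i₀
    have hj₀self : j₀ ∈ sκ.filter (fun j' => ∃ i, r j' i ∧ r j₀ i) := by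
      obtain ⟨i, hi⟩ := h1 j₀ hj₀
      exact Finset.mem_filter.mpr ⟨hj₀, i, hi, hi⟩
    have hpos : 0 < (sι.filter (fun i => r j₀ i)).card := by
      rw [h4 j₀ hj₀]
      exact Finset.card_pos.mpr ⟨j₀, hj₀self⟩
    obtain ⟨i₀, hi₀⟩ := Finset.card_pos.mp hpos
    rw [Finset.mem_filter] at hi₀
    obtain ⟨hi₀ι, hri₀⟩ := hi₀
    -- recurse
    set sκ' := sκ.erase j₀ with hsκ'
    set sι' := sι.erase i₀ with hsι'
    have hcard' : sκ'.card = b := by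
      rw [hsκ', Finset.card_erase_of_mem hj₀]; omega
    have h1' : ∀ j ∈ sκ', ∃ i, r j i := fun j hj => h1 j (Finset.mem_of_mem_erase hj)
    -- h2'
    have h2' : ∀ i ∈ sι', ∃ j ∈ sκ', r j i := by
      intro i hi
      have hii₀ : i ≠ i₀ := Finset.ne_of_mem_erase hi
      have hiι : i ∈ sι := Finset.mem_of_mem_erase hi
      obtain ⟨j, hjκ, hji⟩ := h2 i hiι
      by_cases hj : j = j₀
      · subst hj
        -- need another j'
        have h2card : 1 < (sι.filter (fun i' => r j i')).card := by
          apply Finset.one_lt_card.mpr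
          exact ⟨i, Finset.mem_filter.mpr ⟨hiι, hji⟩, i₀,
            Finset.mem_filter.mpr ⟨hi₀ι, hri₀⟩, hii₀⟩
        rw [h4 j hjκ] at h2card
        obtain ⟨j', hj'mem, hj'ne⟩ := Finset.exists_mem_ne h2card j
        rw [Finset.mem_filter] at hj'mem
        obtain ⟨hj'κ, i'', h5, h6⟩ := hj'mem
        refine ⟨j', Finset.mem_erase.mpr ⟨hj'ne, hj'κ⟩, ?_⟩
        exact hmem j j' i ⟨i'', h5, h6⟩ hji
      · exact ⟨j, Finset.mem_erase.mpr ⟨hj, hjκ⟩, hji⟩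
    -- h4'
    have hfilter_erase : ∀ (i₁ : ι) (s : Finset ι) (p : ι → Prop),
        ((s.erase i₁).filter (fun i => p i)) = (s.filter (fun i => p i)).erase i₁ := by
      intro i₁ s p
      ext x
      simp only [Finset.mem_filter, Finset.mem_erase]
      tauto
    have hfilter_eraseκ : ∀ (j₁ : κ) (s : Finset κ) (p : κ → Prop),
        ((s.erase j₁).filter (fun j => p j)) = (s.filter (fun j => p j)).erase j₁ := by
      intro j₁ s p
      ext x
      simp only [Finset.mem_filter, Finset.mem_erase]
      tauto
    have h4' : ∀ j ∈ sκ', (sι'.filter (fun i => r j i)).card =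
        (sκ'.filter (fun j' => ∃ i, r j' i ∧ r j i)).card := by
      intro j hj
      have hjκ : j ∈ sκ := Finset.mem_of_mem_erase hj
      rw [hsι', hsκ', hfilter_erase, hfilter_eraseκ]
      by_cases hclass : ∃ i, r j₀ i ∧ r j i
      · have hji₀ : r j i₀ := by
          obtain ⟨i'', h5, h6⟩ := hclass
          exact hmem j₀ j i₀ ⟨i'', h6, h5⟩ hri₀
        rw [Finset.card_erase_of_mem (Finset.mem_filter.mpr ⟨hi₀ι, hji₀⟩),
          Finset.card_erase_of_mem (Finset.mem_filter.mpr ⟨hj₀, hclass⟩), h4 j hjκ]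
      · have hni₀ : ¬ r j i₀ := fun hc => hclass ⟨i₀, hri₀, hc⟩
        have e1 : (sι.filter (fun i => r j i)).erase i₀ = sι.filter (fun i => r j i) :=
          Finset.erase_eq_of_notMem (fun hc => hni₀ (Finset.mem_filter.mp hc).2)
        have e2 : ((sκ.filter (fun j' => ∃ i, r j' i ∧ r j i)).erase j₀)
            = sκ.filter (fun j' => ∃ i, r j' i ∧ r j i) :=
          Finset.erase_eq_of_notMem (fun hc => hclass (Finset.mem_filter.mp hc).2)
        rw [e1, e2, h4 j hjκ]
    obtain ⟨f', hinj', hmap', hcov'⟩ := IH sκ' sι' hcard' h1' h2' h4'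
    refine ⟨Function.update f' j₀ i₀, ?_, ?_, ?_⟩
    · intro a ha b hb hab
      have ha' : a ∈ sκ := Finset.mem_coe.mp ha
      have hb' : b ∈ sκ := Finset.mem_coe.mp hb
      by_cases haj : a = j₀ <;> by_cases hbj : b = j₀
      · rw [haj, hbj]
      · exfalso
        rw [haj, Function.update_self] at hab
        rw [Function.update_of_ne hbj] at hab
        have hbκ' : b ∈ sκ' := Finset.mem_erase.mpr ⟨hbj, hb'⟩
        have := (hmap' b hbκ').1
        rw [← hab] at this
        exact (Finset.notMem_erase i₀ sι) this
      · exfalso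
        rw [hbj, Function.update_self] at hab
        rw [Function.update_of_ne haj] at hab
        have haκ' : a ∈ sκ' := Finset.mem_erase.mpr ⟨haj, ha'⟩
        have := (hmap' a haκ').1
        rw [hab] at this
        exact (Finset.notMem_erase i₀ sι) this
      · rw [Function.update_of_ne haj, Function.update_of_ne hbj] at hab
        exact hinj' (Finset.mem_coe.mpr (Finset.mem_erase.mpr ⟨haj, ha'⟩))
          (Finset.mem_coe.mpr (Finset.mem_erase.mpr ⟨hbj, hb'⟩)) hab
    · intro j hj
      by_cases hjj : j = j₀
      · subst hjj
        rw [Function.update_self]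
        exact ⟨hi₀ι, hri₀⟩
      · rw [Function.update_of_ne hjj]
        have hjκ' : j ∈ sκ' := Finset.mem_erase.mpr ⟨hjj, hj⟩
        exact ⟨Finset.mem_of_mem_erase (hmap' j hjκ').1, (hmap' j hjκ').2⟩
    · intro i hi
      by_cases hii : i = i₀
      · subst hii
        exact Finset.mem_image.mpr ⟨j₀, hj₀, by simp⟩
      · have hiι' : i ∈ sι' := Finset.mem_erase.mpr ⟨hii, hi⟩
        obtain ⟨j, hjκ', hfj⟩ := Finset.mem_image.mp (hcov' hiι')
        refine Finset.mem_image.mpr ⟨j, Finset.mem_of_mem_erase hjκ', ?_⟩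
        rw [Function.update_of_ne (Finset.ne_of_mem_erase hjκ'), hfj]

end KS

/-- Krull–Schmidt for virtually simple modules: if `M = V_1 ⊕ ⋯ ⊕ V_n` and
`N = U_1 ⊕ ⋯ ⊕ U_m` with all pieces virtually simple, and `M`, `N` embed in each
other, then `n = m` and there is a permutation `σ` with `U_i ≅ V_{σ(i)}`. -/
theorem stmt11 (R : Type*) [Ring R] (M N : Type*) [AddCommGroup M] [Module R M]
    [AddCommGroup N] [Module R N]
    (n m : ℕ) (V : Fin n → Submodule R M) (U : Fin m → Submodule R N)
    (hVind : iSupIndep V) (hVsup : iSup V = ⊤) (hVvs : ∀ i, VirtuallySimple R (V i))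
    (hUind : iSupIndep U) (hUsup : iSup U = ⊤) (hUvs : ∀ j, VirtuallySimple R (U j))
    (f : M →ₗ[R] N) (hf : Function.Injective f)
    (g : N →ₗ[R] M) (hg : Function.Injective g) :
    n = m ∧ ∃ σ : Fin m ≃ Fin n, ∀ i : Fin m, Nonempty (U i ≃ₗ[R] V (σ i)) := by
  classical
  have hMint : DirectSum.IsInternal V :=
    (DirectSum.isInternal_submodule_iff_iSupIndep_and_iSup_eq_top V).mpr ⟨hVind, hVsup⟩
  have hNint : DirectSum.IsInternal U :=
    (DirectSum.isInternal_submodule_iff_iSupIndep_and_iSup_eq_top U).mpr ⟨hUind, hUsup⟩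
  let eM : ((i : Fin n) → V i) ≃ₗ[R] M :=
    (DirectSum.linearEquivFunOnFintype R (Fin n) (fun i => ↥(V i))).symm.trans
      (LinearEquiv.ofBijective (DirectSum.coeLinearMap V) hMint)
  let eN : ((j : Fin m) → U j) ≃ₗ[R] N :=
    (DirectSum.linearEquivFunOnFintype R (Fin m) (fun j => ↥(U j))).symm.trans
      (LinearEquiv.ofBijective (DirectSum.coeLinearMap U) hNint)
  let F : ((i : Fin n) → V i) →ₗ[R] ((j : Fin m) → U j) :=
    (eN.symm : N →ₗ[R] _) ∘ₗ f ∘ₗ (eM : _ →ₗ[R] M)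
  have hF : Function.Injective F := by
    have : ⇑F = ⇑eN.symm ∘ ⇑f ∘ ⇑eM := rfl
    rw [this]
    exact eN.symm.injective.comp (hf.comp eM.injective)
  let G : ((j : Fin m) → U j) →ₗ[R] ((i : Fin n) → V i) :=
    (eM.symm : M →ₗ[R] _) ∘ₗ g ∘ₗ (eN : _ →ₗ[R] N)
  have hG : Function.Injective G := by
    have : ⇑G = ⇑eM.symm ∘ ⇑g ∘ ⇑eN := rfl
    rw [this]
    exact eM.symm.injective.comp (hg.comp eN.injective)
  let r : Fin m → Fin n → Prop := fun j i => Nonempty (↥(U j) ≃ₗ[R] ↥(V i))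
  have hr : ∀ j j' i i', r j i → r j' i → r j' i' → r j i' := by
    rintro j j' i i' ⟨e1⟩ ⟨e2⟩ ⟨e3⟩
    exact ⟨(e1.trans e2.symm).trans e3⟩
  have htotU : ∀ j, ∃ i, r j i := by
    intro j
    have hsinj : Function.Injective (LinearMap.single R (fun j' => ↥(U j')) j) := by
      intro x y hxy
      have := congrArg (fun w => w j) hxy
      simpa using this
    have hinj : Function.Injective (G ∘ₗ LinearMap.single R (fun j' => ↥(U j')) j) := by
      have : ⇑(G ∘ₗ LinearMap.single R (fun j' => ↥(U j')) j)
          = ⇑G ∘ ⇑(LinearMap.single R (fun j' => ↥(U j')) j) := rfl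
      rw [this]
      exact hG.comp hsinj
    obtain ⟨i, hi⟩ := proj_exists (vs_uniform (hUvs j)) (hUvs j).1 (fun i => ↥(V i)) _ hinj
    exact ⟨i, emb_iso (hUvs j).1 (hVvs i) _ hi⟩
  have htotV : ∀ i, ∃ j, Nonempty (↥(V i) ≃ₗ[R] ↥(U j)) := by
    intro i
    have hsinj : Function.Injective (LinearMap.single R (fun i' => ↥(V i')) i) := by
      intro x y hxy
      have := congrArg (fun w => w i) hxy
      simpa using this
    have hinj : Function.Injective (F ∘ₗ LinearMap.single R (fun i' => ↥(V i')) i) := by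
      have : ⇑(F ∘ₗ LinearMap.single R (fun i' => ↥(V i')) i)
          = ⇑F ∘ ⇑(LinearMap.single R (fun i' => ↥(V i')) i) := rfl
      rw [this]
      exact hF.comp hsinj
    obtain ⟨j, hj⟩ := proj_exists (vs_uniform (hVvs i)) (hVvs i).1 (fun j => ↥(U j)) _ hinj
    exact ⟨j, emb_iso (hVvs i).1 (hUvs j) _ hj⟩
  have hcnt : ∀ j : Fin m, Fintype.card {i // Nonempty (↥(V i) ≃ₗ[R] ↥(U j))}
      = Fintype.card {j' // Nonempty (↥(U j') ≃ₗ[R] ↥(U j))} := by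
    intro j
    have le1 := class_count (fun i => ↥(V i)) (fun j' => ↥(U j')) hVvs hUvs F hF (↥(U j))
    have le2 := class_count (fun j' => ↥(U j')) (fun i => ↥(V i)) hUvs hVvs G hG (↥(U j))
    omega
  rcases Nat.eq_zero_or_pos n with hn | hn
  · subst hn
    have hm : m = 0 := by
      by_contra hm
      obtain ⟨i, -⟩ := htotU ⟨0, Nat.pos_of_ne_zero hm⟩
      exact i.elim0
    subst hm
    exact ⟨rfl, Equiv.refl _, fun i => i.elim0⟩
  · haveI : Nonempty (Fin n) := ⟨⟨0, hn⟩⟩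
    have hm1 : ∀ j ∈ (Finset.univ : Finset (Fin m)), ∃ i, r j i := fun j _ => htotU j
    have hm2 : ∀ i ∈ (Finset.univ : Finset (Fin n)),
        ∃ j ∈ (Finset.univ : Finset (Fin m)), r j i := by
      intro i _
      obtain ⟨j, ⟨e⟩⟩ := htotV i
      exact ⟨j, Finset.mem_univ j, ⟨e.symm⟩⟩
    have hm4 : ∀ j ∈ (Finset.univ : Finset (Fin m)),
        ((Finset.univ : Finset (Fin n)).filter (fun i => r j i)).card =
        ((Finset.univ : Finset (Fin m)).filter (fun j' => ∃ i, r j' i ∧ r j i)).card := by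
      intro j _
      have c1 : ((Finset.univ : Finset (Fin n)).filter (fun i => r j i)).card
          = Fintype.card {i // Nonempty (↥(V i) ≃ₗ[R] ↥(U j))} := by
        rw [← Fintype.card_subtype]
        exact Fintype.card_congr (Equiv.subtypeEquivRight (fun i =>
          ⟨fun ⟨e⟩ => ⟨e.symm⟩, fun ⟨e⟩ => ⟨e.symm⟩⟩))
      have c2 : ((Finset.univ : Finset (Fin m)).filter (fun j' => ∃ i, r j' i ∧ r j i)).card
          = Fintype.card {j' // Nonempty (↥(U j') ≃ₗ[R] ↥(U j))} := by
        rw [← Fintype.card_subtype]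
        refine Fintype.card_congr (Equiv.subtypeEquivRight (fun j' => ?_))
        constructor
        · rintro ⟨i, ⟨e1⟩, ⟨e2⟩⟩; exact ⟨e1.trans e2.symm⟩
        · rintro ⟨e⟩
          obtain ⟨i, ⟨e'⟩⟩ := htotU j
          exact ⟨i, ⟨e.trans e'⟩, ⟨e'⟩⟩
      rw [c1, c2, hcnt j]
    obtain ⟨σf, hinj, hmaps, hcov⟩ := match_lemma r hr (Finset.univ : Finset (Fin m)).card
      Finset.univ Finset.univ rfl hm1 hm2 (by
        intro j hj
        have h := hm4 j hj
        convert h using 2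
        refine Finset.ext fun x => ?_
        simp only [Finset.mem_filter])
    have hinj' : Function.Injective σf := fun a b hab =>
      hinj (Finset.mem_coe.mpr (Finset.mem_univ a)) (Finset.mem_coe.mpr (Finset.mem_univ b)) hab
    have hsurj : Function.Surjective σf := by
      intro i
      obtain ⟨j, -, hj⟩ := Finset.mem_image.mp (hcov (Finset.mem_univ i))
      exact ⟨j, hj⟩
    let σ : Fin m ≃ Fin n := Equiv.ofBijective σf ⟨hinj', hsurj⟩
    have hnm : n = m := by
      have h := Fintype.card_congr σ
      simpa using h.symm
    exact ⟨hnm, σ, fun j => (hmaps j (Finset.mem_univ j)).2⟩
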